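/- For any integer K ≥ 1 and p ∈ (0,1], the sharper bound h(K,p) ≤ 6/((K+1)(K+2)·p²) holds, where h(K,p) = Σ_{k=1}^{K} (1/k²) · C(K,k) p^k (1-p)^{K-k}. -/

import Mathlib

/-! Raising both indices of a binomial coefficient by two gives
`(1/k²) C(K,k) = (k+1)(k+2)/k² · C(K+2,k+2)/((K+1)(K+2)) ≤ 6 C(K+2,k+2)/((K+1)(K+2))` for `k ≥ 1`.
After trading `p^k` for `p^(k+2)/p²`, what remains is part of the binomial expansion of
`(p + (1-p))^(K+2) = 1`. -/

open Finset

theorem Nat.add_one_mul_add_two_mul_choose (n k : ℕ) :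
    (n + 1) * (n + 2) * n.choose k = (k + 1) * (k + 2) * (n + 2).choose (k + 2) := by
  have h₁ := Nat.add_one_mul_choose_eq n k
  have h₂ := Nat.add_one_mul_choose_eq (n + 1) (k + 1)
  calc (n + 1) * (n + 2) * n.choose k = (n + 2) * ((n + 1) * n.choose k) := by ring
    _ = (n + 2) * (n + 1).choose (k + 1) * (k + 1) := by rw [h₁, mul_assoc]
    _ = (k + 1) * (k + 2) * (n + 2).choose (k + 2) := by rw [h₂]; ring

theorem inv_sq_mul_choose_le {n k : ℕ} (hk : 1 ≤ k) :
    1 / (k : ℝ) ^ 2 * n.choose k ≤ 6 / ((n + 1) * (n + 2)) * (n + 2).choose (k + 2) := by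
  have hk' : (1 : ℝ) ≤ k := by exact_mod_cast hk
  have hid : ((n : ℝ) + 1) * (n + 2) * n.choose k = (k + 1) * (k + 2) * (n + 2).choose (k + 2) := by
    exact_mod_cast Nat.add_one_mul_add_two_mul_choose n k
  have hsmall : ((k : ℝ) + 1) * (k + 2) ≤ 6 * k ^ 2 := by nlinarith
  rw [div_mul_eq_mul_div, div_mul_eq_mul_div, div_le_div_iff₀ (by positivity) (by positivity),
    one_mul, mul_comm _ ((n + 1 : ℝ) * _), hid]
  nlinarith [mul_le_mul_of_nonneg_right hsmall (Nat.cast_nonneg ((n + 2).choose (k + 2)))]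

theorem sum_choose_mul_pow_mul_pow_le_one {n : ℕ} {s : Finset ℕ} (hs : s ⊆ range (n + 1))
    {p : ℝ} (hp : 0 ≤ p) (hp1 : p ≤ 1) :
    ∑ j ∈ s, (n.choose j : ℝ) * p ^ j * (1 - p) ^ (n - j) ≤ 1 := by
  have h1p : 0 ≤ 1 - p := by linarith
  calc ∑ j ∈ s, (n.choose j : ℝ) * p ^ j * (1 - p) ^ (n - j)
      ≤ ∑ j ∈ range (n + 1), (n.choose j : ℝ) * p ^ j * (1 - p) ^ (n - j) :=
        sum_le_sum_of_subset_of_nonneg hs fun _ _ _ => by positivity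
    _ = (p + (1 - p)) ^ n := by
        rw [add_pow]; exact sum_congr rfl fun _ _ => by ring
    _ = 1 := by norm_num

theorem stmt_2_general (K : ℕ) (p : ℝ) (hp : 0 < p) (hp1 : p ≤ 1) :
    ∑ k ∈ Finset.Icc 1 K,
      (1 / (k : ℝ) ^ 2) * (K.choose k : ℝ) * p ^ k * (1 - p) ^ (K - k)
      ≤ 6 / (((K : ℝ) + 1) * ((K : ℝ) + 2) * p ^ 2) := by
  set c : ℝ := 6 / (((K : ℝ) + 1) * ((K : ℝ) + 2) * p ^ 2)
  have hshift : ∀ k : ℕ, c * ((K + 2).choose (k + 2) * p ^ (k + 2) * (1 - p) ^ (K + 2 - (k + 2)))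
      = 6 / ((K + 1) * (K + 2)) * (K + 2).choose (k + 2) * p ^ k * (1 - p) ^ (K - k) := by
    intro k
    rw [Nat.add_sub_add_right, pow_add]
    simp only [c]
    field_simp
  have htail : ∑ k ∈ Icc 1 K, ((K + 2).choose (k + 2) : ℝ) * p ^ (k + 2) * (1 - p) ^ (K + 2 - (k + 2))
      ≤ 1 := by
    have hsub : (Icc 1 K).map (addRightEmbedding 2) ⊆ range (K + 2 + 1) := fun j hj => by
      simp only [mem_map, mem_Icc, addRightEmbedding_apply] at hj
      simp only [mem_range]
      omega
    simpa only [sum_map, addRightEmbedding_apply]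
      using sum_choose_mul_pow_mul_pow_le_one hsub hp.le hp1
  calc ∑ k ∈ Icc 1 K, (1 / (k : ℝ) ^ 2) * (K.choose k : ℝ) * p ^ k * (1 - p) ^ (K - k)
      ≤ ∑ k ∈ Icc 1 K, 6 / ((K + 1) * (K + 2)) * (K + 2).choose (k + 2) * p ^ k * (1 - p) ^ (K - k) :=
        sum_le_sum fun k hk => by gcongr ?_ * _ * _; exact inv_sq_mul_choose_le (mem_Icc.mp hk).1
    _ = c * ∑ k ∈ Icc 1 K, ((K + 2).choose (k + 2) : ℝ) * p ^ (k + 2) * (1 - p) ^ (K + 2 - (k + 2)) := by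
        rw [mul_sum]; exact (sum_congr rfl fun k _ => hshift k).symm
    _ ≤ c := mul_le_of_le_one_right (by positivity) htail

theorem stmt_2 (K : ℕ) (hK : 1 ≤ K) (p : ℝ) (hp : 0 < p) (hp1 : p ≤ 1) :
    ∑ k ∈ Finset.Icc 1 K,
      (1 / (k : ℝ) ^ 2) * (K.choose k : ℝ) * p ^ k * (1 - p) ^ (K - k)
      ≤ 6 / (((K : ℝ) + 1) * ((K : ℝ) + 2) * p ^ 2) :=
  stmt_2_general K p hp hp1
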